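/- The Bayesian α-Fisher metric decomposes as g^{(I_α)}_{i,j}(θ) = λ(θ)[ Cov_{p_θ^{(α)}}(∂_i log p_θ, ∂_j log p_θ) + ∂_i log λ(θ) · ∂_j log λ(θ) ], i.e., in the 1-dimensional case with θ ∈ ℝ: -∂_{θ'}∂_θ I_α(p̃_θ, p̃_{θ'})|_{θ'=θ} = λ(θ)[ Var_{p_θ^{(α)}}(∂_θ log p_θ) + (∂_θ log λ(θ))² ]. -/

import Mathlib

open Real Finset

/-!
Write `R(θ, θ') = ∑ₓ p_θ(x) p_{θ'}(x)^(α-1)` and `S(θ) = ∑ₓ p_θ(x)^α`. Pulling `λ(θ')` out of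
the first logarithm, the divergence becomes `λ(θ) g(θ, θ') + B(θ) + λ(θ')` with
`g(θ, θ') = log R(θ, θ') / (1 - α) - log λ(θ') + log S(θ') / α`, so the mixed derivative on the
diagonal is `λ' ∂_{θ'} g + λ ∂_{θ'} ∂_θ g`. The logarithmic derivatives of `R` and `S` in `θ'`
are `α - 1` and `α` times the escort mean of the score, so `∂_{θ'} g = -λ'/λ`, while
`∂_{θ'} ∂_θ log R` is `α - 1` times the escort variance of the score.
-/

theorem deriv_deriv_mul_add_add {F g : ℝ → ℝ → ℝ} {l B C gθ : ℝ → ℝ} {θ₀ l' gθ' gθθ' : ℝ}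
    (hF : ∀ θ θ', F θ θ' = l θ * g θ θ' + B θ + C θ')
    (hl : HasDerivAt l l' θ₀) (hB : DifferentiableAt ℝ B θ₀)
    (hg : ∀ θ', HasDerivAt (g · θ') (gθ θ') θ₀)
    (hg' : HasDerivAt (g θ₀) gθ' θ₀) (hgθ : HasDerivAt gθ gθθ' θ₀) :
    deriv (fun θ' => deriv (fun θ => F θ θ') θ₀) θ₀ = l' * gθ' + l θ₀ * gθθ' := by
  have inner : ∀ θ', deriv (fun θ => F θ θ') θ₀
      = l' * g θ₀ θ' + l θ₀ * gθ θ' + deriv B θ₀ + 0 := fun θ' => by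
    simp only [hF]
    exact (((hl.mul (hg θ')).add hB.hasDerivAt).add (hasDerivAt_const θ₀ (C θ'))).deriv
  simp only [inner]
  exact ((((hg'.const_mul l').add (hgθ.const_mul (l θ₀))).add_const _).add_const
    _).deriv.trans (by ring)

theorem mul_rpow_sub_one_eq {x : ℝ} (hx : x ≠ 0) (y β : ℝ) :
    y * x ^ (β - 1) = x ^ β * (y / x) := by
  rw [rpow_sub_one hx]
  ring

section Escort

variable {X : Type*} [Fintype X]

noncomputable def escort (α : ℝ) (q : X → ℝ) (x : X) : ℝ := q x ^ α / ∑ y, q y ^ α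

theorem sum_escort_mul (α : ℝ) (q f : X → ℝ) :
    ∑ x, escort α q x * f x = (∑ x, q x ^ α * f x) / ∑ x, q x ^ α := by
  rw [Finset.sum_div]
  exact Finset.sum_congr rfl fun x _ => div_mul_eq_mul_div _ _ _

theorem log_sum_mul_mul_rpow [Nonempty X] {a q : X → ℝ} {c : ℝ} (β : ℝ)
    (ha : ∀ x, 0 < a x) (hq : ∀ x, 0 < q x) (hc : 0 < c) :
    log (∑ x, a x * (c * q x) ^ β) = β * log c + log (∑ x, a x * q x ^ β) := by
  have hsum : ∑ x, a x * (c * q x) ^ β = c ^ β * ∑ x, a x * q x ^ β := by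
    rw [Finset.mul_sum]
    refine Finset.sum_congr rfl fun x _ => ?_
    rw [mul_rpow hc.le (hq x).le]
    ring
  have hpos : 0 < ∑ x, a x * q x ^ β :=
    Finset.sum_pos (fun x _ => mul_pos (ha x) (rpow_pos_of_pos (hq x) β)) univ_nonempty
  rw [hsum, log_mul (rpow_pos_of_pos hc β).ne' hpos.ne', log_rpow hc]

variable {p : ℝ → X → ℝ} {p' : X → ℝ} {θ₀ : ℝ}

theorem hasDerivAt_sum_mul_rpow (b : X → ℝ) (β : ℝ)
    (hp : ∀ x, HasDerivAt (fun θ => p θ x) (p' x) θ₀) (hpos : ∀ x, 0 < p θ₀ x) :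
    HasDerivAt (fun θ => ∑ x, b x * p θ x ^ β)
      (β * ∑ x, b x * p θ₀ x ^ β * (p' x / p θ₀ x)) θ₀ := by
  have h := HasDerivAt.fun_sum (u := univ) fun x _ =>
    ((hp x).rpow_const (p := β) (Or.inl (hpos x).ne')).const_mul (b x)
  refine h.congr_deriv ?_
  rw [Finset.mul_sum]
  refine Finset.sum_congr rfl fun x _ => ?_
  rw [rpow_sub_one (hpos x).ne']
  field_simp [(hpos x).ne']

theorem hasDerivAt_log_sum_mul [Nonempty X] {c : X → ℝ} (hc : ∀ x, 0 < c x)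
    (hp : ∀ x, HasDerivAt (fun θ => p θ x) (p' x) θ₀) (hpos : ∀ x, 0 < p θ₀ x) :
    HasDerivAt (fun θ => log (∑ x, p θ x * c x))
      ((∑ x, p' x * c x) / ∑ x, p θ₀ x * c x) θ₀ :=
  (HasDerivAt.fun_sum fun x _ => (hp x).mul_const (c x)).log
    (Finset.sum_pos (fun x _ => mul_pos (hpos x) (hc x)) univ_nonempty).ne'

theorem hasDerivAt_log_sum_rpow [Nonempty X] (α : ℝ)
    (hp : ∀ x, HasDerivAt (fun θ => p θ x) (p' x) θ₀) (hpos : ∀ x, 0 < p θ₀ x) :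
    HasDerivAt (fun θ => log (∑ x, p θ x ^ α))
      (α * ∑ x, escort α (p θ₀) x * (p' x / p θ₀ x)) θ₀ := by
  have h := hasDerivAt_sum_mul_rpow (fun _ => 1) α hp hpos
  simp only [one_mul] at h
  have hS : 0 < ∑ x, p θ₀ x ^ α :=
    Finset.sum_pos (fun x _ => rpow_pos_of_pos (hpos x) α) univ_nonempty
  refine (h.log hS.ne').congr_deriv ?_
  rw [sum_escort_mul]
  ring

theorem hasDerivAt_log_sum_mul_rpow_sub_one [Nonempty X] (α : ℝ)
    (hp : ∀ x, HasDerivAt (fun θ => p θ x) (p' x) θ₀) (hpos : ∀ x, 0 < p θ₀ x) :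
    HasDerivAt (fun θ' => log (∑ x, p θ₀ x * p θ' x ^ (α - 1)))
      ((α - 1) * ∑ x, escort α (p θ₀) x * (p' x / p θ₀ x)) θ₀ := by
  have h := hasDerivAt_sum_mul_rpow (p θ₀) (α - 1) hp hpos
  have hS : 0 < ∑ x, p θ₀ x * p θ₀ x ^ (α - 1) :=
    Finset.sum_pos (fun x _ => mul_pos (hpos x) (rpow_pos_of_pos (hpos x) _)) univ_nonempty
  refine (h.log hS.ne').congr_deriv ?_
  simp only [mul_rpow_sub_one_eq (hpos _).ne', div_self (hpos _).ne', mul_one, sum_escort_mul]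
  ring

theorem hasDerivAt_sum_mul_rpow_sub_one_div [Nonempty X] (α : ℝ)
    (hp : ∀ x, HasDerivAt (fun θ => p θ x) (p' x) θ₀) (hpos : ∀ x, 0 < p θ₀ x) :
    HasDerivAt (fun θ' => (∑ x, p' x * p θ' x ^ (α - 1)) / ∑ x, p θ₀ x * p θ' x ^ (α - 1))
      ((α - 1) * (∑ x, escort α (p θ₀) x * (p' x / p θ₀ x) ^ 2
        - (∑ x, escort α (p θ₀) x * (p' x / p θ₀ x)) ^ 2)) θ₀ := by
  have hN := hasDerivAt_sum_mul_rpow p' (α - 1) hp hpos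
  have hD := hasDerivAt_sum_mul_rpow (p θ₀) (α - 1) hp hpos
  have hS : 0 < ∑ x, p θ₀ x * p θ₀ x ^ (α - 1) :=
    Finset.sum_pos (fun x _ => mul_pos (hpos x) (rpow_pos_of_pos (hpos x) _)) univ_nonempty
  refine (hN.fun_div hD hS.ne').congr_deriv ?_
  simp only [mul_rpow_sub_one_eq (hpos _).ne', div_self (hpos _).ne', mul_one,
    sum_escort_mul] at hS ⊢
  field_simp

end Escort

/-- The Bayesian α-Fisher metric decomposition (one-dimensional case):
the Eguchi metric of the Bayesian relative α-entropy equals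
λ(θ)[ Var_{p_θ^{(α)}}(∂_θ log p_θ) + (∂_θ log λ(θ))² ]. -/
theorem bayes_alpha_metric_decomposition {X : Type*} [Fintype X]
    (p : ℝ → X → ℝ) (lam : ℝ → ℝ) (θ₀ : ℝ)
    (hpos : ∀ θ x, 0 < p θ x) (hsum : ∀ θ, ∑ x, p θ x = 1)
    (hlam_pos : ∀ θ, 0 < lam θ)
    (hp_smooth : ∀ x, ContDiff ℝ 2 (fun θ => p θ x))
    (hlam_smooth : ContDiff ℝ 2 lam)
    (α : ℝ) (hα : 0 < α) (hα1 : α ≠ 1) :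
    -(deriv (fun θ' =>
        deriv (fun θ =>
          (lam θ / (1 - α)) *
              Real.log (∑ x, p θ x * (lam θ' * p θ' x) ^ (α - 1))
            + lam θ'
            - lam θ * (Real.log (∑ x, (p θ x) ^ α) / (α * (1 - α))
                - (1 + Real.log (lam θ))
                - (1 / α) * Real.log (∑ x, (p θ' x) ^ α))) θ₀) θ₀)
    = lam θ₀ *
        (((∑ x, ((p θ₀ x) ^ α / (∑ y, (p θ₀ y) ^ α)) *
              (deriv (fun θ => p θ x) θ₀ / p θ₀ x) ^ 2)
          - (∑ x, ((p θ₀ x) ^ α / (∑ y, (p θ₀ y) ^ α)) *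
              (deriv (fun θ => p θ x) θ₀ / p θ₀ x)) ^ 2)
        + (deriv (fun θ => Real.log (lam θ)) θ₀) ^ 2) := by
  have : Nonempty X := by
    by_contra hX
    simpa [not_nonempty_iff.mp hX] using hsum θ₀
  have hp : ∀ x, HasDerivAt (fun θ => p θ x) (deriv (fun θ => p θ x) θ₀) θ₀ :=
    fun x => ((hp_smooth x).differentiable two_ne_zero θ₀).hasDerivAt
  have hlam : HasDerivAt lam (deriv lam θ₀) θ₀ :=
    (hlam_smooth.differentiable two_ne_zero θ₀).hasDerivAt
  have hα' : 1 - α ≠ 0 := sub_ne_zero.mpr hα1.symm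
  have hg_left := fun θ' => (((hasDerivAt_log_sum_mul
    (fun x => rpow_pos_of_pos (hpos θ' x) (α - 1)) hp (hpos θ₀)).div_const (1 - α)).sub_const
    (log (lam θ'))).add_const (log (∑ x, p θ' x ^ α) / α)
  have hg_right := (((hasDerivAt_log_sum_mul_rpow_sub_one α hp (hpos θ₀)).div_const (1 - α)).sub
    (hlam.log (hlam_pos θ₀).ne')).add ((hasDerivAt_log_sum_rpow α hp (hpos θ₀)).div_const α)
  have hg_mixed := (hasDerivAt_sum_mul_rpow_sub_one_div α hp (hpos θ₀)).div_const (1 - α)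
  rw [deriv_deriv_mul_add_add (l := lam) (C := lam)
      (g := fun θ θ' => log (∑ x, p θ x * p θ' x ^ (α - 1)) / (1 - α) - log (lam θ')
        + log (∑ x, p θ' x ^ α) / α)
      (B := fun θ => -(lam θ * (log (∑ x, p θ x ^ α) / (α * (1 - α)) - (1 + log (lam θ)))))
      ?identity hlam ?hB hg_left hg_right hg_mixed,
    (hlam.log (hlam_pos θ₀).ne').deriv]
  · simp only [escort]
    field_simp [(hlam_pos θ₀).ne']
    ring
  case identity =>
    intro θ θ'
    rw [log_sum_mul_mul_rpow _ (hpos θ) (hpos θ') (hlam_pos θ')]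
    field_simp
    ring
  case hB =>
    have := ((hasDerivAt_log_sum_rpow α hp (hpos θ₀)).div_const (α * (1 - α))).sub
      ((hasDerivAt_const θ₀ 1).add (hlam.log (hlam_pos θ₀).ne'))
    exact (hlam.mul this).neg.differentiableAt
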